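/- Let weights w_i ≥ 1 be assigned to vertices and Ã = (WA + AW)/2 with W = diag(w). Let V* be a maximal independent set such that for every i ∉ V* there exists a neighbor j ∈ V* with w_i ≥ w_j. Then x* with x*_i = w̄/w_i for i ∈ V* (where 1/w̄ = Σ_{i∈V*} 1/w_i) and x*_i = 0 otherwise is a Nash equilibrium of the weighted social distancing game, with equilibrium value λ* = w̄. -/

import Mathlib

/-!
Against `x*`, the payoff of pure strategy `i` is `w̄ · ∑_{j ∈ V*} Ã_ij / w_j`. On `V*`, independence
leaves only the diagonal term `Ã_ii / w_i = 1`, so every strategy in the support earns exactly `w̄`.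
Off `V*`, the neighbour `j ∈ V*` with `w_j ≤ w_i` alone contributes `(w_i + w_j) / (2 w_j) ≥ 1`, so
no pure strategy earns less than `w̄`. Hence `w̄` is both the value of `x*` and the minimum payoff
against it, which is the equilibrium condition.
-/

open Matrix Finset

section Simplex

variable {ι : Type*} [Fintype ι]

theorem le_dotProduct_of_mem_stdSimplex {x y : ι → ℝ} {c : ℝ} (hx : x ∈ stdSimplex ℝ ι)
    (hy : ∀ i, c ≤ y i) : c ≤ x ⬝ᵥ y :=
  calc c = ∑ i, x i * c := by rw [← Finset.sum_mul, hx.2, one_mul]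
    _ ≤ x ⬝ᵥ y := Finset.sum_le_sum fun i _ => mul_le_mul_of_nonneg_left (hy i) (hx.1 i)

theorem dotProduct_eq_of_mem_stdSimplex {x y : ι → ℝ} {c : ℝ} (hx : x ∈ stdSimplex ℝ ι)
    (hy : ∀ i, x i ≠ 0 → y i = c) : x ⬝ᵥ y = c :=
  calc x ⬝ᵥ y = ∑ i, x i * c :=
        Finset.sum_congr rfl fun i _ => by by_cases h : x i = 0 <;> simp [h, hy]
    _ = c := by rw [← Finset.sum_mul, hx.2, one_mul]

end Simplex

section HarmonicWeights

variable {ι : Type*} [DecidableEq ι]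

noncomputable def harmonicWeights (w : ι → ℝ) (S : Finset ι) : ι → ℝ :=
  fun i => if i ∈ S then (∑ j ∈ S, (w j)⁻¹)⁻¹ / w i else 0

theorem harmonicWeights_of_notMem {w : ι → ℝ} {S : Finset ι} {i : ι} (hi : i ∉ S) :
    harmonicWeights w S i = 0 :=
  if_neg hi

theorem harmonicWeights_mem_stdSimplex [Fintype ι] {w : ι → ℝ} {S : Finset ι} (hS : S.Nonempty)
    (hw : ∀ i ∈ S, 0 < w i) : harmonicWeights w S ∈ stdSimplex ℝ ι := by
  have hsum : 0 < ∑ i ∈ S, (w i)⁻¹ := Finset.sum_pos (fun i hi => inv_pos.2 (hw i hi)) hS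
  refine ⟨fun i => ?_, ?_⟩
  · unfold harmonicWeights
    split_ifs with hi
    · exact div_nonneg (inv_pos.2 hsum).le (hw i hi).le
    · exact le_rfl
  · calc ∑ i, harmonicWeights w S i = (∑ i ∈ S, (w i)⁻¹)⁻¹ * ∑ i ∈ S, (w i)⁻¹ := by
          simp only [harmonicWeights, Finset.sum_ite_mem, Finset.univ_inter, Finset.mul_sum,
            div_eq_mul_inv]
      _ = 1 := inv_mul_cancel₀ hsum.ne'

theorem mulVec_harmonicWeights [Fintype ι] (M : Matrix ι ι ℝ) (w : ι → ℝ) (S : Finset ι)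
    (i : ι) :
    (M *ᵥ harmonicWeights w S) i = (∑ j ∈ S, (w j)⁻¹)⁻¹ * ∑ j ∈ S, M i j / w j := by
  simp only [mulVec, dotProduct, harmonicWeights, mul_ite, mul_zero, Finset.sum_ite_mem,
    Finset.univ_inter, Finset.mul_sum]
  exact Finset.sum_congr rfl fun j _ => by ring

end HarmonicWeights

section WeightedAdjacency

variable {ι : Type*}

theorem smul_diagonal_mul_add_mul_diagonal_apply [Fintype ι] [DecidableEq ι] (A : Matrix ι ι ℝ)
    (w : ι → ℝ) (i j : ι) :
    ((2 : ℝ)⁻¹ • (diagonal w * A + A * diagonal w)) i j = A i j * (w i + w j) / 2 := by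
  simp only [Matrix.smul_apply, Matrix.add_apply, diagonal_mul, mul_diagonal, smul_eq_mul]
  ring

theorem sum_weightedAdjacency_div_eq_one {A : Matrix ι ι ℝ} {w : ι → ℝ} {S : Finset ι} {i : ι}
    (hi : i ∈ S) (hdiag : A i i = 1) (hindep : ∀ j ∈ S, i ≠ j → A i j = 0) (hwi : w i ≠ 0) :
    ∑ j ∈ S, A i j * (w i + w j) / 2 / w j = 1 := by
  rw [Finset.sum_eq_single_of_mem i hi fun j hj hji => by simp [hindep j hj (Ne.symm hji)], hdiag]
  field_simp
  ring

theorem one_le_sum_weightedAdjacency_div {A : Matrix ι ι ℝ} {w : ι → ℝ} {S : Finset ι} {i j : ι}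
    (hA : ∀ k, 0 ≤ A i k) (hw : ∀ k, 0 < w k) (hj : j ∈ S) (hAij : A i j = 1) (hwj : w j ≤ w i) :
    1 ≤ ∑ k ∈ S, A i k * (w i + w k) / 2 / w k := by
  have hterm : 1 ≤ A i j * (w i + w j) / 2 / w j := by
    rw [hAij, one_mul, le_div_iff₀ (hw j)]
    linarith
  refine hterm.trans
    (Finset.single_le_sum (f := fun k => A i k * (w i + w k) / 2 / w k) (fun k _ => ?_) hj)
  have := hA k
  have := hw i
  have := hw k
  positivity

end WeightedAdjacency

theorem stmt_13_general (n : ℕ) (A : Matrix (Fin n) (Fin n) ℝ)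
    (h01 : ∀ i j, A i j = 0 ∨ A i j = 1)
    (hdiag : ∀ i, A i i = 1)
    (w : Fin n → ℝ) (hw : ∀ i, 1 ≤ w i)
    (At : Matrix (Fin n) (Fin n) ℝ)
    (hAt : At = (2 : ℝ)⁻¹ •
      (Matrix.diagonal w * A + A * Matrix.diagonal w))
    (Vs : Finset (Fin n)) (hne : Vs.Nonempty)
    (hindep : ∀ i ∈ Vs, ∀ j ∈ Vs, i ≠ j → A i j = 0)
    (hmax : ∀ i, i ∉ Vs → ∃ j ∈ Vs, A i j = 1 ∧ w j ≤ w i)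
    (wbar : ℝ) (hwbar : wbar = (∑ i ∈ Vs, (w i)⁻¹)⁻¹)
    (xstar : Fin n → ℝ)
    (hxstar : xstar = fun i => if i ∈ Vs then wbar / w i else 0) :
    xstar ∈ stdSimplex ℝ (Fin n) ∧
    (∀ x ∈ stdSimplex ℝ (Fin n),
        xstar ⬝ᵥ At.mulVec xstar ≤ x ⬝ᵥ At.mulVec xstar) ∧
    xstar ⬝ᵥ At.mulVec xstar = wbar := by
  have hwpos : ∀ i, 0 < w i := fun i => one_pos.trans_le (hw i)
  have hAnonneg : ∀ i j, 0 ≤ A i j := fun i j => by rcases h01 i j with h | h <;> simp [h]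
  have hx : xstar = harmonicWeights w Vs := by rw [hxstar, hwbar]; rfl
  have hpayoff : ∀ i, (At *ᵥ xstar) i = wbar * ∑ j ∈ Vs, A i j * (w i + w j) / 2 / w j := by
    intro i
    simp only [hx, mulVec_harmonicWeights, hAt, smul_diagonal_mul_add_mul_diagonal_apply, hwbar]
  have hsupport : ∀ i ∈ Vs, (At *ᵥ xstar) i = wbar := fun i hi => by
    rw [hpayoff, sum_weightedAdjacency_div_eq_one hi (hdiag i) (hindep i hi) (hwpos i).ne', mul_one]
  have hwbar_pos : 0 < wbar :=
    hwbar ▸ inv_pos.2 (Finset.sum_pos (fun i _ => inv_pos.2 (hwpos i)) hne)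
  have hbest : ∀ i, wbar ≤ (At *ᵥ xstar) i := fun i => by
    by_cases hi : i ∈ Vs
    · exact (hsupport i hi).ge
    · obtain ⟨j, hj, hAij, hwj⟩ := hmax i hi
      rw [hpayoff]
      exact le_mul_of_one_le_right hwbar_pos.le
        (one_le_sum_weightedAdjacency_div (hAnonneg i) hwpos hj hAij hwj)
  have hmem : xstar ∈ stdSimplex ℝ (Fin n) :=
    hx ▸ harmonicWeights_mem_stdSimplex hne fun i _ => hwpos i
  have hvalue : xstar ⬝ᵥ At *ᵥ xstar = wbar :=
    dotProduct_eq_of_mem_stdSimplex hmem fun i hxi =>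
      hsupport i (by_contra fun hi => hxi (hx ▸ harmonicWeights_of_notMem hi))
  exact ⟨hmem, fun x hx => hvalue ▸ le_dotProduct_of_mem_stdSimplex hx hbest, hvalue⟩

/-- Theorem 4.2: with additive weights Ã = (WA + AW)/2, the strategy with
x*_i = w̄/w_i on a maximal independent set V* (where 1/w̄ = Σ_{i∈V*} 1/w_i),
provided every outside node has a neighbor in V* of no larger weight, is a
Nash equilibrium with value λ* = w̄. -/
theorem stmt_13 (n : ℕ) (A : Matrix (Fin n) (Fin n) ℝ)
    (hsym : A.IsSymm)
    (h01 : ∀ i j, A i j = 0 ∨ A i j = 1)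
    (hdiag : ∀ i, A i i = 1)
    (w : Fin n → ℝ) (hw : ∀ i, 1 ≤ w i)
    (At : Matrix (Fin n) (Fin n) ℝ)
    (hAt : At = (2 : ℝ)⁻¹ •
      (Matrix.diagonal w * A + A * Matrix.diagonal w))
    (Vs : Finset (Fin n)) (hne : Vs.Nonempty)
    (hindep : ∀ i ∈ Vs, ∀ j ∈ Vs, i ≠ j → A i j = 0)
    (hmax : ∀ i, i ∉ Vs → ∃ j ∈ Vs, A i j = 1 ∧ w j ≤ w i)
    (wbar : ℝ) (hwbar : wbar = (∑ i ∈ Vs, (w i)⁻¹)⁻¹)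
    (xstar : Fin n → ℝ)
    (hxstar : xstar = fun i => if i ∈ Vs then wbar / w i else 0) :
    xstar ∈ stdSimplex ℝ (Fin n) ∧
    (∀ x ∈ stdSimplex ℝ (Fin n),
        xstar ⬝ᵥ At.mulVec xstar ≤ x ⬝ᵥ At.mulVec xstar) ∧
    xstar ⬝ᵥ At.mulVec xstar = wbar :=
  stmt_13_general n A h01 hdiag w hw At hAt Vs hne hindep hmax wbar hwbar xstar hxstar
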